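/- Let P(z) = Σ_{j=0}^m z^j A_j with A_j ∈ ℂ^{n×n}, let λ ∈ ℂ and x ∈ ℂⁿ with x^H x = 1, and set r := −P(λ)x and Λ_m := (1, λ, …, λ^m)ᵀ. Then for both M = F and M = 2, η_M(λ, x, P) = ‖r‖₂ / ‖Λ_m‖₂, and the infimum is attained: the polynomial ΔP(z) := Σ_{j=0}^m z^j ΔA_j with ΔA_j := conj(λ^j) r x^H / ‖Λ_m‖₂² satisfies (P(λ) + ΔP(λ)) x = 0 and |||ΔP|||_F = |||ΔP|||₂ = ‖r‖₂ / ‖Λ_m‖₂. -/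

import Mathlib

/-!
If `(P(λ) + ΔP(λ)) x = 0` then `r = ΔP(λ) x = Σ_j λ^j ΔA_j x`, so the triangle and Cauchy–Schwarz
inequalities give `‖r‖ ≤ ‖Λ_m‖ (Σ_j ‖ΔA_j x‖²)^{1/2} ≤ ‖Λ_m‖ |||ΔP|||_M`, because
`‖ΔA_j x‖ ≤ ‖ΔA_j‖₂ ≤ ‖ΔA_j‖_F` for a unit vector `x`. Choosing `ΔA_j` proportional to
`conj(λ^j)` is the equality case of Cauchy–Schwarz, and the common rank-one factor `r x^H` has
equal spectral and Frobenius norms `‖r‖`, so both bounds are attained.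
-/

open scoped ComplexConjugate
open Matrix

noncomputable section

variable {ι : Type*} [Fintype ι] [DecidableEq ι]

/-- Evaluation of the matrix polynomial with coefficient list `A` at the point `z`. -/
def polyEval {m : ℕ} (A : Fin (m+1) → Matrix ι ι ℂ) (z : ℂ) : Matrix ι ι ℂ :=
  ∑ j : Fin (m+1), z ^ (j : ℕ) • A j

/-- Squared Euclidean norm of a complex vector. -/
def vecNormSq (x : ι → ℂ) : ℝ := ∑ i, ‖x i‖ ^ 2

/-- Euclidean norm of a complex vector. -/
def vecNorm (x : ι → ℂ) : ℝ := Real.sqrt (vecNormSq x)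

/-- `‖(1, z, …, z^m)‖₂²`. -/
def lamNormSq (m : ℕ) (z : ℂ) : ℝ := ∑ j : Fin (m+1), ‖z ^ (j : ℕ)‖ ^ 2

/-- Squared Frobenius norm of a matrix. -/
def frobNormSq (M : Matrix ι ι ℂ) : ℝ := ∑ i, ∑ k, ‖M i k‖ ^ 2

/-- Spectral (operator 2-) norm of a matrix. -/
def specNorm (M : Matrix ι ι ℂ) : ℝ := ‖Matrix.toEuclideanCLM (𝕜 := ℂ) M‖

/-- Frobenius norm of a matrix polynomial: `(Σ_j ‖A_j‖_F²)^{1/2}`. -/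
def polyNormF {m : ℕ} (A : Fin (m+1) → Matrix ι ι ℂ) : ℝ :=
  Real.sqrt (∑ j, frobNormSq (A j))

/-- Spectral norm of a matrix polynomial: `(Σ_j ‖A_j‖₂²)^{1/2}`. -/
def polyNorm2 {m : ℕ} (A : Fin (m+1) → Matrix ι ι ℂ) : ℝ :=
  Real.sqrt (∑ j, specNorm (A j) ^ 2)

/-- Structured backward error of `(lam, x)` as an approximate eigenpair of the matrix
polynomial `A`, with respect to the polynomial norm `N` and the structure class `S`. -/
def eta {m : ℕ} (N : (Fin (m+1) → Matrix ι ι ℂ) → ℝ)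
    (S : Set (Fin (m+1) → Matrix ι ι ℂ)) (lam : ℂ) (x : ι → ℂ)
    (A : Fin (m+1) → Matrix ι ι ℂ) : ℝ :=
  sInf {t | ∃ ΔA ∈ S, (polyEval A lam + polyEval ΔA lam) *ᵥ x = 0 ∧ t = N ΔA}

/-- A matrix polynomial is regular if `det P(z) ≠ 0` for some `z`. -/
def Regular {m : ℕ} (A : Fin (m+1) → Matrix ι ι ℂ) : Prop :=
  ∃ z : ℂ, (polyEval A z).det ≠ 0

open Finset

lemma one_le_lamNormSq {m : ℕ} (z : ℂ) : 1 ≤ lamNormSq m z := by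
  simpa [lamNormSq] using
    single_le_sum (fun (j : Fin (m + 1)) _ => sq_nonneg ‖z ^ (j : ℕ)‖) (mem_univ 0)

lemma lamNormSq_pos {m : ℕ} (z : ℂ) : 0 < lamNormSq m z :=
  one_pos.trans_le (one_le_lamNormSq z)

section Norms

variable {ι : Type*} [Fintype ι]

lemma vecNormSq_nonneg (v : ι → ℂ) : 0 ≤ vecNormSq v :=
  sum_nonneg fun _ _ => sq_nonneg _

lemma vecNorm_nonneg (v : ι → ℂ) : 0 ≤ vecNorm v := Real.sqrt_nonneg _

lemma sq_vecNorm (v : ι → ℂ) : vecNorm v ^ 2 = vecNormSq v :=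
  Real.sq_sqrt (vecNormSq_nonneg v)

lemma vecNorm_eq_norm_toLp (v : ι → ℂ) :
    vecNorm v = ‖(WithLp.toLp 2 v : EuclideanSpace ℂ ι)‖ := by
  rw [EuclideanSpace.norm_eq]
  rfl

lemma vecNorm_smul (c : ℂ) (v : ι → ℂ) : vecNorm (c • v) = ‖c‖ * vecNorm v := by
  simp only [vecNorm_eq_norm_toLp, WithLp.toLp_smul, norm_smul]

lemma vecNormSq_star (v : ι → ℂ) : vecNormSq (star v) = vecNormSq v := by
  simp only [vecNormSq, Pi.star_apply, norm_star]

lemma ofReal_vecNormSq (v : ι → ℂ) : (vecNormSq v : ℂ) = star v ⬝ᵥ v := by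
  simp only [vecNormSq, dotProduct, Pi.star_apply, Complex.ofReal_sum, Complex.ofReal_pow,
    Complex.star_def, Complex.conj_mul']

lemma vecNorm_eq_one_of_star_dotProduct_self {v : ι → ℂ} (hv : star v ⬝ᵥ v = 1) :
    vecNorm v = 1 := by
  have h : vecNormSq v = 1 := by exact_mod_cast (ofReal_vecNormSq v).trans hv
  rw [vecNorm, h, Real.sqrt_one]

lemma frobNormSq_nonneg (M : Matrix ι ι ℂ) : 0 ≤ frobNormSq M :=
  sum_nonneg fun _ _ => sum_nonneg fun _ _ => sq_nonneg _

lemma frobNormSq_smul (c : ℂ) (M : Matrix ι ι ℂ) :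
    frobNormSq (c • M) = ‖c‖ ^ 2 * frobNormSq M := by
  simp only [frobNormSq, Matrix.smul_apply, smul_eq_mul, norm_mul, mul_pow, mul_sum]

lemma frobNormSq_vecMulVec (u v : ι → ℂ) :
    frobNormSq (vecMulVec u v) = vecNormSq u * vecNormSq v := by
  simp only [frobNormSq, vecNormSq, vecMulVec_apply, norm_mul, mul_pow, sum_mul_sum]

lemma vecNormSq_mulVec_le (M : Matrix ι ι ℂ) (v : ι → ℂ) :
    vecNormSq (M *ᵥ v) ≤ frobNormSq M * vecNormSq v := by
  rw [frobNormSq, vecNormSq, sum_mul]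
  refine sum_le_sum fun i _ => ?_
  calc ‖(M *ᵥ v) i‖ ^ 2 ≤ (∑ k, ‖M i k‖ * ‖v k‖) ^ 2 := by
        gcongr
        simpa only [mulVec, dotProduct, norm_mul] using norm_sum_le univ fun k => M i k * v k
    _ ≤ (∑ k, ‖M i k‖ ^ 2) * ∑ k, ‖v k‖ ^ 2 := sum_mul_sq_le_sq_mul_sq _ _ _

lemma vecNorm_mulVec_le_sqrt_frobNormSq (M : Matrix ι ι ℂ) (v : ι → ℂ) :
    vecNorm (M *ᵥ v) ≤ √(frobNormSq M) * vecNorm v := by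
  rw [vecNorm, vecNorm, ← Real.sqrt_mul (frobNormSq_nonneg M)]
  exact Real.sqrt_le_sqrt (vecNormSq_mulVec_le M v)

variable [DecidableEq ι]

lemma specNorm_nonneg (M : Matrix ι ι ℂ) : 0 ≤ specNorm M := norm_nonneg _

lemma vecNorm_mulVec_le_specNorm (M : Matrix ι ι ℂ) (v : ι → ℂ) :
    vecNorm (M *ᵥ v) ≤ specNorm M * vecNorm v := by
  simpa only [specNorm, vecNorm_eq_norm_toLp, Matrix.toEuclideanCLM_toLp] using
    (Matrix.toEuclideanCLM (𝕜 := ℂ) M).le_opNorm (WithLp.toLp 2 v)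

lemma specNorm_le_sqrt_frobNormSq (M : Matrix ι ι ℂ) : specNorm M ≤ √(frobNormSq M) := by
  refine ContinuousLinearMap.opNorm_le_bound _ (Real.sqrt_nonneg _) fun w => ?_
  have h := vecNorm_mulVec_le_sqrt_frobNormSq M (WithLp.ofLp w)
  rwa [vecNorm_eq_norm_toLp, vecNorm_eq_norm_toLp, WithLp.toLp_ofLp,
    ← Matrix.toEuclideanCLM_toLp, WithLp.toLp_ofLp] at h

lemma specNorm_smul (c : ℂ) (M : Matrix ι ι ℂ) : specNorm (c • M) = ‖c‖ * specNorm M := by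
  rw [specNorm, map_smul, norm_smul, specNorm]

lemma specNorm_vecMulVec_star (u v : ι → ℂ) :
    specNorm (vecMulVec u (star v)) = vecNorm u * vecNorm v := by
  refine le_antisymm ?_ ?_
  · calc specNorm (vecMulVec u (star v)) ≤ √(frobNormSq (vecMulVec u (star v))) :=
          specNorm_le_sqrt_frobNormSq _
      _ = vecNorm u * vecNorm v := by
          rw [frobNormSq_vecMulVec, Real.sqrt_mul (vecNormSq_nonneg u), vecNormSq_star]; rfl
  · rcases (vecNorm_nonneg v).eq_or_lt with hv | hv
    · rw [← hv, mul_zero]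
      exact specNorm_nonneg _
    -- test the operator norm on `v` itself, which is mapped to `‖v‖² • u`
    have h := vecNorm_mulVec_le_specNorm (vecMulVec u (star v)) v
    rw [vecMulVec_mulVec, op_smul_eq_smul, ← ofReal_vecNormSq, vecNorm_smul, Complex.norm_real,
      Real.norm_of_nonneg (vecNormSq_nonneg v), ← sq_vecNorm] at h
    exact le_of_mul_le_mul_right (by linarith) hv

end Norms

section Residual

variable {ι : Type*} [Fintype ι] {m : ℕ}

lemma polyEval_mulVec (B : Fin (m + 1) → Matrix ι ι ℂ) (z : ℂ) (v : ι → ℂ) :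
    polyEval B z *ᵥ v = ∑ j : Fin (m + 1), z ^ (j : ℕ) • (B j *ᵥ v) := by
  simp only [polyEval, Matrix.sum_mulVec, Matrix.smul_mulVec]

lemma vecNorm_polyEval_mulVec_le (B : Fin (m + 1) → Matrix ι ι ℂ) (z : ℂ) (v : ι → ℂ)
    (c : Fin (m + 1) → ℝ) (hc : ∀ j, vecNorm (B j *ᵥ v) ≤ c j) :
    vecNorm (polyEval B z *ᵥ v) ≤ √(lamNormSq m z) * √(∑ j, c j ^ 2) :=
  calc vecNorm (polyEval B z *ᵥ v) ≤ ∑ j : Fin (m + 1), ‖z ^ (j : ℕ)‖ * vecNorm (B j *ᵥ v) := by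
        simp only [polyEval_mulVec, vecNorm_eq_norm_toLp, WithLp.toLp_sum, WithLp.toLp_smul,
          ← norm_smul]
        exact norm_sum_le _ _
    _ ≤ ∑ j : Fin (m + 1), ‖z ^ (j : ℕ)‖ * c j := by gcongr with j; exact hc j
    _ ≤ √(lamNormSq m z) * √(∑ j, c j ^ 2) := Real.sum_mul_le_sqrt_mul_sqrt _ _ _

lemma vecNorm_polyEval_mulVec_le_polyNormF (B : Fin (m + 1) → Matrix ι ι ℂ) (z : ℂ)
    (v : ι → ℂ) :
    vecNorm (polyEval B z *ᵥ v) ≤ √(lamNormSq m z) * (polyNormF B * vecNorm v) := by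
  refine vecNorm_polyEval_mulVec_le B z v _
    (fun j => vecNorm_mulVec_le_sqrt_frobNormSq (B j) v) |>.trans_eq ?_
  simp only [mul_pow, Real.sq_sqrt (frobNormSq_nonneg _), ← sum_mul,
    Real.sqrt_mul (sum_nonneg fun j _ => frobNormSq_nonneg _), Real.sqrt_sq (vecNorm_nonneg v),
    polyNormF]

lemma vecNorm_polyEval_mulVec_le_polyNorm2 [DecidableEq ι] (B : Fin (m + 1) → Matrix ι ι ℂ)
    (z : ℂ) (v : ι → ℂ) :
    vecNorm (polyEval B z *ᵥ v) ≤ √(lamNormSq m z) * (polyNorm2 B * vecNorm v) := by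
  refine vecNorm_polyEval_mulVec_le B z v _
    (fun j => vecNorm_mulVec_le_specNorm (B j) v) |>.trans_eq ?_
  simp only [mul_pow, ← sum_mul, Real.sqrt_mul (sum_nonneg fun j _ => sq_nonneg _),
    Real.sqrt_sq (vecNorm_nonneg v), polyNorm2]

end Residual

section Perturbation

variable {ι : Type*} {m : ℕ}

def minimalPerturbation (m : ℕ) (z : ℂ) (M : Matrix ι ι ℂ) : Fin (m + 1) → Matrix ι ι ℂ :=
  fun j => (conj (z ^ (j : ℕ)) / (lamNormSq m z : ℂ)) • M

lemma polyEval_minimalPerturbation (z : ℂ) (M : Matrix ι ι ℂ) :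
    polyEval (minimalPerturbation m z M) z = M := by
  have hL : (lamNormSq m z : ℂ) ≠ 0 := by exact_mod_cast (lamNormSq_pos z).ne'
  have hsum : ∑ j : Fin (m + 1), z ^ (j : ℕ) * conj (z ^ (j : ℕ)) = lamNormSq m z := by
    simp only [lamNormSq, Complex.ofReal_sum, Complex.ofReal_pow, Complex.mul_conj']
  simp only [polyEval, minimalPerturbation, smul_smul, ← sum_smul, mul_div_assoc', ← sum_div,
    hsum, div_self hL, one_smul]

lemma sum_norm_sq_minimalPerturbation_coeff (z : ℂ) :
    ∑ j : Fin (m + 1), ‖conj (z ^ (j : ℕ)) / (lamNormSq m z : ℂ)‖ ^ 2 = (lamNormSq m z)⁻¹ := by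
  have hL := lamNormSq_pos (m := m) z
  simp only [norm_div, RCLike.norm_conj, Complex.norm_real, Real.norm_of_nonneg hL.le, div_pow,
    ← sum_div]
  rw [← lamNormSq, sq, div_mul_cancel_left₀ hL.ne']

variable [Fintype ι]

lemma polyNormF_minimalPerturbation (z : ℂ) (M : Matrix ι ι ℂ) :
    polyNormF (minimalPerturbation m z M) = √(frobNormSq M) / √(lamNormSq m z) := by
  simp only [polyNormF, minimalPerturbation, frobNormSq_smul, ← sum_mul,
    sum_norm_sq_minimalPerturbation_coeff, inv_mul_eq_div, Real.sqrt_div' _ (lamNormSq_pos z).le]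

lemma polyNorm2_minimalPerturbation [DecidableEq ι] (z : ℂ) (M : Matrix ι ι ℂ) :
    polyNorm2 (minimalPerturbation m z M) = specNorm M / √(lamNormSq m z) := by
  simp only [polyNorm2, minimalPerturbation, specNorm_smul, mul_pow, ← sum_mul,
    sum_norm_sq_minimalPerturbation_coeff, inv_mul_eq_div, Real.sqrt_div' _ (lamNormSq_pos z).le,
    Real.sqrt_sq (specNorm_nonneg M)]

end Perturbation

lemma eta_eq_of_isLeast {ι : Type*} [Fintype ι] {m : ℕ}
    {N : (Fin (m + 1) → Matrix ι ι ℂ) → ℝ} {S : Set (Fin (m + 1) → Matrix ι ι ℂ)}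
    {lam : ℂ} {x : ι → ℂ} {A ΔA : Fin (m + 1) → Matrix ι ι ℂ} {t : ℝ}
    (hΔS : ΔA ∈ S) (hΔ : (polyEval A lam + polyEval ΔA lam) *ᵥ x = 0) (ht : N ΔA = t)
    (hlb : ∀ ΔB ∈ S, (polyEval A lam + polyEval ΔB lam) *ᵥ x = 0 → t ≤ N ΔB) :
    eta N S lam x A = t :=
  IsLeast.csInf_eq ⟨⟨ΔA, hΔS, hΔ, ht.symm⟩, by rintro _ ⟨ΔB, hB, hsol, rfl⟩; exact hlb ΔB hB hsol⟩

/-- The (unstructured) backward error of an approximate eigenpair equals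
`‖r‖₂ / ‖Λ_m‖₂` for both the Frobenius and the spectral polynomial norm, and the infimum is
attained by the explicitly given perturbation. -/
theorem unstructured_backward_error {n m : ℕ}
    (A : Fin (m+1) → Matrix (Fin n) (Fin n) ℂ)
    (lam : ℂ) (x : Fin n → ℂ) (hx : star x ⬝ᵥ x = 1)
    (r : Fin n → ℂ) (hr : r = -(polyEval A lam *ᵥ x))
    (ΔA : Fin (m+1) → Matrix (Fin n) (Fin n) ℂ)
    (hΔ : ∀ j : Fin (m+1),
      ΔA j = (conj (lam ^ (j : ℕ)) / (lamNormSq m lam : ℂ)) • vecMulVec r (star x)) :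
    eta polyNormF Set.univ lam x A = vecNorm r / Real.sqrt (lamNormSq m lam) ∧
    eta polyNorm2 Set.univ lam x A = vecNorm r / Real.sqrt (lamNormSq m lam) ∧
    (polyEval A lam + polyEval ΔA lam) *ᵥ x = 0 ∧
    polyNormF ΔA = vecNorm r / Real.sqrt (lamNormSq m lam) ∧
    polyNorm2 ΔA = vecNorm r / Real.sqrt (lamNormSq m lam) := by
  have hΔA : ΔA = minimalPerturbation m lam (vecMulVec r (star x)) := funext hΔ
  have hx1 : vecNorm x = 1 := vecNorm_eq_one_of_star_dotProduct_self hx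
  have hL : 0 < √(lamNormSq m lam) := Real.sqrt_pos.2 (lamNormSq_pos lam)
  have hsolves : ∀ B : Fin (m + 1) → Matrix (Fin n) (Fin n) ℂ,
      (polyEval A lam + polyEval B lam) *ᵥ x = 0 ↔ polyEval B lam *ᵥ x = r := by
    intro B
    rw [Matrix.add_mulVec, hr, add_eq_zero_iff_eq_neg']
  have hsolve : (polyEval A lam + polyEval ΔA lam) *ᵥ x = 0 := by
    rw [hsolves, hΔA, polyEval_minimalPerturbation, vecMulVec_mulVec, op_smul_eq_smul, hx,
      one_smul]
  have hnormF : polyNormF ΔA = vecNorm r / √(lamNormSq m lam) := by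
    rw [hΔA, polyNormF_minimalPerturbation, frobNormSq_vecMulVec, vecNormSq_star, ← sq_vecNorm x,
      hx1, one_pow, mul_one, vecNorm]
  have hnorm2 : polyNorm2 ΔA = vecNorm r / √(lamNormSq m lam) := by
    rw [hΔA, polyNorm2_minimalPerturbation, specNorm_vecMulVec_star, hx1, mul_one]
  refine ⟨eta_eq_of_isLeast (Set.mem_univ _) hsolve hnormF fun B _ hB => ?_,
    eta_eq_of_isLeast (Set.mem_univ _) hsolve hnorm2 fun B _ hB => ?_, hsolve, hnormF, hnorm2⟩
  · rw [div_le_iff₀' hL, ← (hsolves B).1 hB, ← mul_one (polyNormF B), ← hx1]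
    exact vecNorm_polyEval_mulVec_le_polyNormF B lam x
  · rw [div_le_iff₀' hL, ← (hsolves B).1 hB, ← mul_one (polyNorm2 B), ← hx1]
    exact vecNorm_polyEval_mulVec_le_polyNorm2 B lam x
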